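/- Let A : [0, T] → ℝ^{V×V} be continuous with nonnegative off-diagonal entries (A(t)(v, w) ≥ 0 for all v ≠ w and all t). If x : [0, T] → ℝⱽ is differentiable, satisfies x′(t) = A(t) x(t) on [0, T], and x(0) has all components nonnegative, then x(t) has all components nonnegative for every t ∈ [0, T]. -/

import Mathlib

/-! For `K` above every row sum of `A t`, the perturbed state `z t = x t + ε e^{Kt} 𝟙` starts in
the open positive orthant and cannot leave the closed one: where `z t ≥ 0` and `z t w = 0`, the
Metzler property gives `(A t *ᵥ z t) w ≥ 0`, hence
`z' t w = (A t *ᵥ z t) w + ε e^{Kt} (K - (A t *ᵥ 𝟙) w) > 0`.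
Letting `ε → 0` gives `x t ≥ 0`. -/

open Set Filter Topology Matrix

theorem HasDerivWithinAt.eventually_gt_nhdsGT {f : ℝ → ℝ} {f' x : ℝ}
    (hf : HasDerivWithinAt f f' (Ici x) x) (hf' : 0 < f') : ∀ᶠ z in 𝓝[>] x, f x < f z := by
  filter_upwards [(hasDerivWithinAt_iff_tendsto_slope' (lt_irrefl x)).1 hf.Ioi_of_Ici
    (Ioi_mem_nhds hf'), self_mem_nhdsWithin] with z hslope (hz : x < z)
  replace hslope : 0 < slope f x z := hslope
  rw [slope_def_field] at hslope
  exact sub_pos.1 ((div_pos_iff_of_pos_right (sub_pos.2 hz)).1 hslope)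

theorem nonneg_on_Icc_of_hasDerivWithinAt_pos {V : Type*} [Finite V] {z z' : ℝ → V → ℝ}
    {a b : ℝ} (hz : ContinuousOn z (Icc a b))
    (hz' : ∀ t ∈ Ico a b, HasDerivWithinAt z (z' t) (Ici t) t) (ha : 0 ≤ z a)
    (inward : ∀ t ∈ Ico a b, 0 ≤ z t → ∀ w, z t w = 0 → 0 < z' t w) :
    ∀ t ∈ Icc a b, 0 ≤ z t := by
  have hclosed : IsClosed ({t | 0 ≤ z t} ∩ Icc a b) := by
    rw [inter_comm]
    exact hz.preimage_isClosed_of_isClosed isClosed_Icc isClosed_Ici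
  refine hclosed.Icc_subset_of_forall_mem_nhdsWithin ha ?_
  rintro t ⟨ht0 : 0 ≤ z t, ht⟩
  refine eventually_all.2 fun w => ?_
  have hw := hasDerivWithinAt_pi.1 (hz' t ht) w
  rcases (ht0 w).eq_or_lt with hzero | hpos
  · filter_upwards [hw.eventually_gt_nhdsGT (inward t ht ht0 w hzero.symm)] with r hr
    exact hzero.trans_lt hr |>.le
  · filter_upwards [(hw.continuousWithinAt.mono Ioi_subset_Ici_self).eventually
      (lt_mem_nhds hpos)] with r hr
    exact hr.le

namespace Matrix

variable {V α : Type*}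

def IsMetzler [Zero α] [LE α] (M : Matrix V V α) : Prop :=
  ∀ i j, i ≠ j → 0 ≤ M i j

theorem IsMetzler.mulVec_apply_nonneg [Fintype V] [Semiring α] [PartialOrder α] [IsOrderedRing α]
    {M : Matrix V V α} (hM : M.IsMetzler) {z : V → α} (hz : 0 ≤ z) {w : V} (hw : z w = 0) :
    0 ≤ (M *ᵥ z) w :=
  Finset.sum_nonneg fun u _ => by
    rcases eq_or_ne w u with rfl | hwu
    · simp [hw]
    · exact mul_nonneg (hM w u hwu) (hz u)

end Matrix

theorem IsCompact.exists_mulVec_one_lt {X V : Type*} [TopologicalSpace X] [Fintype V]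
    {A : X → Matrix V V ℝ} {s : Set X} (hs : IsCompact s) (hA : ContinuousOn A s) :
    ∃ K, ∀ t ∈ s, ∀ w, (A t *ᵥ 1) w < K := by
  obtain ⟨C, hC⟩ := hs.exists_bound_of_continuousOn
    ((continuous_id.matrix_mulVec continuous_const).comp_continuousOn hA)
  refine ⟨C + 1, fun t ht w => ?_⟩
  calc (A t *ᵥ 1) w ≤ ‖A t *ᵥ 1‖ := (Real.le_norm_self _).trans (norm_le_pi_norm _ w)
    _ < C + 1 := (hC t ht).trans_lt (lt_add_one C)

theorem nonneg_add_smul_exp_of_isMetzler {V : Type*} [Fintype V] {A : ℝ → Matrix V V ℝ}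
    {x : ℝ → V → ℝ} {a b K ε : ℝ} (hA : ∀ t ∈ Icc a b, (A t).IsMetzler)
    (hK : ∀ t ∈ Icc a b, ∀ w, (A t *ᵥ 1) w < K)
    (hx : ∀ t ∈ Icc a b, HasDerivAt x (A t *ᵥ x t) t) (ha : 0 ≤ x a) (hε : 0 < ε) :
    ∀ t ∈ Icc a b, 0 ≤ x t + (ε * Real.exp (K * t)) • 1 := by
  set c : ℝ → ℝ := fun t => ε * Real.exp (K * t)
  have hc_pos : ∀ t, 0 < c t := fun t => mul_pos hε (Real.exp_pos _)
  have hc : ∀ t, HasDerivAt c (K * c t) t := fun t => by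
    simpa [c, mul_comm, mul_left_comm] using
      (((hasDerivAt_id t).const_mul K).exp).const_mul ε
  have hz : ∀ t ∈ Icc a b, HasDerivAt (fun s => x s + c s • (1 : V → ℝ))
      (A t *ᵥ x t + (K * c t) • 1) t :=
    fun t ht => (hx t ht).add ((hc t).smul_const 1)
  refine nonneg_on_Icc_of_hasDerivWithinAt_pos
    (fun t ht => (hz t ht).continuousAt.continuousWithinAt)
    (fun t ht => (hz t (Ico_subset_Icc_self ht)).hasDerivWithinAt)
    (add_nonneg ha (smul_nonneg (hc_pos a).le zero_le_one)) fun t ht hzt w hzw => ?_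
  replace ht := Ico_subset_Icc_self ht
  have hcoupling := (hA t ht).mulVec_apply_nonneg hzt hzw
  have hdrift := mul_pos (hc_pos t) (sub_pos.2 (hK t ht w))
  simp only [mulVec_add, mulVec_smul, Pi.add_apply, Pi.smul_apply, smul_eq_mul,
    Pi.one_apply, mul_one] at hcoupling ⊢
  linarith

theorem metzler_linear_ode_preserves_nonnegativity_general
    (V : Type*) [Fintype V] (T : ℝ)
    (A : ℝ → Matrix V V ℝ)
    (hAcont : ContinuousOn A (Set.Icc 0 T))
    (hAmetzler : ∀ t ∈ Set.Icc (0 : ℝ) T, ∀ v w, v ≠ w → 0 ≤ A t v w)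
    (x : ℝ → V → ℝ)
    (hx : ∀ t ∈ Set.Icc (0 : ℝ) T, HasDerivAt x ((A t).mulVec (x t)) t)
    (hx0 : ∀ v, 0 ≤ x 0 v) :
    ∀ t ∈ Set.Icc (0 : ℝ) T, ∀ v, 0 ≤ x t v := by
  intro t ht v
  obtain ⟨K, hK⟩ := isCompact_Icc.exists_mulVec_one_lt hAcont
  refine le_of_forall_pos_le_add fun ε hε => ?_
  have := nonneg_add_smul_exp_of_isMetzler hAmetzler hK hx hx0 (div_pos hε (Real.exp_pos (K * t)))
    t ht v
  simpa [div_mul_cancel₀, (Real.exp_pos _).ne'] using this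

/-- A linear ODE `x' = A(t) x` whose (continuous) coefficient matrices have
nonnegative off-diagonal entries (Metzler matrices) preserves nonnegativity of
the state. -/
theorem metzler_linear_ode_preserves_nonnegativity
    (V : Type*) [Fintype V] [DecidableEq V] (T : ℝ) (hT : 0 ≤ T)
    (A : ℝ → Matrix V V ℝ)
    (hAcont : ContinuousOn A (Set.Icc 0 T))
    (hAmetzler : ∀ t ∈ Set.Icc (0 : ℝ) T, ∀ v w, v ≠ w → 0 ≤ A t v w)
    (x : ℝ → V → ℝ)
    (hx : ∀ t ∈ Set.Icc (0 : ℝ) T, HasDerivAt x ((A t).mulVec (x t)) t)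
    (hx0 : ∀ v, 0 ≤ x 0 v) :
    ∀ t ∈ Set.Icc (0 : ℝ) T, ∀ v, 0 ≤ x t v :=
  metzler_linear_ode_preserves_nonnegativity_general V T A hAcont hAmetzler x hx hx0
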